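/- arXiv:2101.06922 — 2 statements merged into one kernel-verified Lean document; each statement's English description precedes it below -/
import Mathlib

section
/- Let y, ŷ ∈ ℝ and σ > 0, and let l(z) = log(p_{y,σ}(z)/p_{ŷ,σ}(z)) be the privacy loss function. Then the pushforward of the Gaussian measure N(y, σ²) under l is the Gaussian measure N(η, 2η), where η = (y − ŷ)²/(2σ²). (When y = ŷ, N(0, 0) is understood as the Dirac measure at 0.) In other words, the privacy loss random variable L = l(Z) with Z ∼ N(y, σ²) is distributed as N(η, 2η). -/
open Real MeasureTheory ProbabilityTheory

/-!
For equal variances the quadratic terms of the two Gaussian exponents cancel, so the privacy loss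
`z ↦ ((y - ŷ) / σ²) z + (ŷ² - y²) / (2σ²)` is affine. An affine image of `N(y, σ²)` is Gaussian,
here with mean `(y - ŷ)² / (2σ²) = η` and variance `((y - ŷ) / σ²)² σ² = 2η`.
-/

/-- The Gaussian density with mean `y` and standard deviation `σ`. -/
noncomputable def gaussDensity (y σ z : ℝ) : ℝ :=
  (1 / (σ * Real.sqrt (2 * Real.pi))) * Real.exp (-(z - y) ^ 2 / (2 * σ ^ 2))

/-- The privacy loss function of the Gaussian output-perturbation mechanism. -/
noncomputable def privacyLoss (y yh σ z : ℝ) : ℝ :=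
  Real.log (gaussDensity y σ z / gaussDensity yh σ z)

lemma gaussianReal_map_affine (μ : ℝ) (v : NNReal) (a b : ℝ) :
    (gaussianReal μ v).map (fun x ↦ a * x + b)
      = gaussianReal (a * μ + b) (.mk (a ^ 2) (sq_nonneg a) * v) := by
  have hcomp : (fun x ↦ a * x + b) = (· + b) ∘ (a * ·) := rfl
  rw [hcomp, ← Measure.map_map (by fun_prop) (by fun_prop), gaussianReal_map_const_mul,
    gaussianReal_map_add_const]

lemma privacyLoss_eq_affine (y yh : ℝ) {σ : ℝ} (hσ : σ ≠ 0) :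
    privacyLoss y yh σ = fun z ↦ (y - yh) / σ ^ 2 * z + (yh ^ 2 - y ^ 2) / (2 * σ ^ 2) := by
  funext z
  have hnorm : 1 / (σ * √(2 * π)) ≠ 0 := by positivity
  rw [privacyLoss, gaussDensity, gaussDensity, mul_div_mul_left _ _ hnorm, ← exp_sub, log_exp]
  field_simp
  ring

/-- the privacy loss random variable of the Gaussian mechanism is
distributed as `N(η, 2η)` with `η = (y - yh)^2 / (2σ^2)`. -/
theorem privacy_loss_gaussian (y yh σ : ℝ) (hσ : 0 < σ) :
    Measure.map (privacyLoss y yh σ) (gaussianReal y (Real.toNNReal (σ ^ 2)))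
      = gaussianReal ((y - yh) ^ 2 / (2 * σ ^ 2))
          (Real.toNNReal (2 * ((y - yh) ^ 2 / (2 * σ ^ 2)))) := by
  rw [privacyLoss_eq_affine y yh hσ.ne', gaussianReal_map_affine]
  congr 1
  · field_simp
    ring
  · rw [← NNReal.coe_inj, NNReal.coe_mul, NNReal.coe_mk, Real.coe_toNNReal _ (sq_nonneg σ),
      Real.coe_toNNReal _ (by positivity)]
    field_simp
end

section
/- Let 𝒩 be a nonempty finite set of cardinality N, H > 0, B > 0, c ∈ ℝ, p⁰ ∈ ℝ, C ∈ ℝ, and (y_m)_{m∈𝒩}, (K_n)_{n∈𝒩} real constants. For (ŷ, V) ∈ ℝ^𝒩 × ℝ^𝒩 define, for each n ∈ 𝒩, Π_n(ŷ, V) := (H/(2B))·[(∑_{m∈𝒩} ŷ_m + C)² + ∑_{m∈𝒩} V_m] − c·H·(∑_{m∈𝒩} ŷ_m + C) + (p⁰/N)·∑_{m∈𝒩} (y_m − ŷ_m) + K_n, and define P(ŷ, V) := (H/(2B))·(∑_{m∈𝒩} ŷ_m + C)² + (H/(2B))·∑_{m∈𝒩} V_m − c·H·(∑_{m∈𝒩}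 ŷ_m + C) − (p⁰/N)·∑_{m∈𝒩} ŷ_m. Then P is an exact potential: for every n ∈ 𝒩, every ŷ_{−n} ∈ ℝ^{𝒩∖{n}}, V_{−n} ∈ ℝ^{𝒩∖{n}}, and all x_n, z_n, x'_n, z'_n ∈ ℝ, Π_n(x_n, ŷ_{−n}, x'_n, V_{−n}) − Π_n(z_n, ŷ_{−n}, z'_n, V_{−n}) = P(x_n, ŷ_{−n}, x'_n, V_{−n}) − P(z_n, ŷ_{−n}, z'_n, V_{−n}), where (x_n, ŷ_{−n}) denotes the vector obtained from ŷ by replacing its n-th coordinate by x_n (and similarly for the V argument). Hence, under the assumption that all agents have the same ratio B_n/B = H, the communication game is a potential game. (Proposition 6.) -/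
open Finset

/-- Proposition 6: under the equal-contributions assumption, `P`
is an exact potential for the communication game: any unilateral change of one
player's decision `(yh_n, V_n)` changes her cost `Pi_n` by exactly the change
in `P`. -/
theorem communication_game_potential {ι : Type*} [Fintype ι] [Nonempty ι]
    [DecidableEq ι]
    (H Btot : ℝ) (hH : 0 < H) (hBtot : 0 < Btot)
    (c p0 C : ℝ) (y K : ι → ℝ)
    (Pi : ι → (ι → ℝ) → (ι → ℝ) → ℝ)
    (hPi : ∀ n yh V, Pi n yh V =
      (H / (2 * Btot)) * ((∑ m, yh m + C) ^ 2 + ∑ m, V m)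
        - c * H * (∑ m, yh m + C)
        + (p0 / (Fintype.card ι)) * ∑ m, (y m - yh m) + K n)
    (P : (ι → ℝ) → (ι → ℝ) → ℝ)
    (hP : ∀ yh V, P yh V =
      (H / (2 * Btot)) * (∑ m, yh m + C) ^ 2 + (H / (2 * Btot)) * ∑ m, V m
        - c * H * (∑ m, yh m + C) - (p0 / (Fintype.card ι)) * ∑ m, yh m) :
    ∀ n : ι, ∀ yh V : ι → ℝ, ∀ x z x' z' : ℝ,
      Pi n (Function.update yh n x) (Function.update V n x')
          - Pi n (Function.update yh n z) (Function.update V n z')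
        = P (Function.update yh n x) (Function.update V n x')
          - P (Function.update yh n z) (Function.update V n z') := by
  intro n yh V x z x' z'
  simp only [hPi, hP, Finset.sum_sub_distrib]
  ring
end
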